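/- Let H be a (k,l)-edge-maximal r-uniform hypergraph with n = |V(H)| ≥ l ≥ t+1 and k, r ≥ 2, where t is the largest integer with C(t-1,r-1) ≤ k. If X is a nonempty proper subset of V(H) achieving the minimum edge-cut (κ'(H) = |E_H(X)|), then there exists an r-subset of V(H) not in E(H) intersecting both X and V(H)\X, and moreover κ'(H) = k. -/

import Mathlib

/-- The set of edges of `E` crossing the cut `(X, S \ X)` inside ground set `S`. -/
def cutEdges {V : Type*} [DecidableEq V] (E : Finset (Finset V)) (S X : Finset V) :
    Finset (Finset V) :=
  E.filter fun e => (e ∩ X).Nonempty ∧ (e ∩ (S \ X)).Nonempty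

/-- `E` is the edge set of a `(k,l)`-edge-maximal `r`-uniform hypergraph on vertex set `W`:
every subhypergraph on at least `l` vertices has edge-connectivity at most `k`, and
adding any missing `r`-subset of `W` creates a subhypergraph on at least `l` vertices
with edge-connectivity at least `k + 1`. -/
def IsKLEdgeMaximal {V : Type*} [DecidableEq V] (r k l : ℕ) (W : Finset V)
    (E : Finset (Finset V)) : Prop :=
  (∀ e ∈ E, e.card = r ∧ e ⊆ W) ∧
  (∀ S ⊆ W, ∀ E' ⊆ E, (∀ e ∈ E', e ⊆ S) → l ≤ S.card →
    ∃ X ⊆ S, X.Nonempty ∧ (S \ X).Nonempty ∧ (cutEdges E' S X).card ≤ k) ∧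
  (∀ e : Finset V, e ⊆ W → e.card = r → e ∉ E →
    ∃ S ⊆ W, ∃ E' ⊆ insert e E, (∀ f ∈ E', f ⊆ S) ∧ l ≤ S.card ∧
      ∀ X ⊆ S, X.Nonempty → (S \ X).Nonempty → k + 1 ≤ (cutEdges E' S X).card)

/-!
Sparsity applied to `H` itself bounds the minimum cut by `k`. If every `r`-set crossing `X`
were an edge, the cut would contain at least `C(n-1, r-1) ≥ C(t, r-1) > k` edges, so some
crossing `r`-set `e` is missing. Adding `e` yields a subhypergraph `(S, E')` all of whose cuts
exceed `k`; it must use `e` (otherwise it contradicts sparsity), and its cut along `X ∩ S` has at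
most one edge more than the cut of `X` in `H`, whence `κ'(H) ≥ k`.
-/

open Finset

section

variable {V : Type*} [DecidableEq V]

theorem cutEdges_inter_subset {E E' : Finset (Finset V)} {S W X : Finset V}
    (hE : E' ⊆ E) (hS : S ⊆ W) : cutEdges E' S (X ∩ S) ⊆ cutEdges E W X := by
  intro f hf
  simp only [cutEdges, mem_filter] at hf ⊢
  obtain ⟨hfE, ⟨x, hx⟩, ⟨y, hy⟩⟩ := hf
  simp only [mem_inter, mem_sdiff] at hx hy
  refine ⟨hE hfE, ⟨x, mem_inter.2 ⟨hx.1, hx.2.1⟩⟩, ⟨y, mem_inter.2 ⟨hy.1, ?_⟩⟩⟩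
  exact mem_sdiff.2 ⟨hS hy.2.1, fun hyX => hy.2.2 ⟨hyX, hy.2.1⟩⟩

theorem card_cutEdges_insert_le (e : Finset V) (E : Finset (Finset V)) (S X : Finset V) :
    (cutEdges (insert e E) S X).card ≤ (cutEdges E S X).card + 1 := by
  unfold cutEdges
  rw [filter_insert]
  split_ifs
  exacts [card_insert_le _ _, Nat.le_succ _]

theorem choose_le_card_cutEdges_powersetCard {W X : Finset V} {r : ℕ} (hr : 2 ≤ r)
    (hXW : X ⊆ W) (hX : X.Nonempty) (hXc : (W \ X).Nonempty) :
    (W.card - 1).choose (r - 1) ≤ (cutEdges (W.powersetCard r) W X).card := by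
  obtain ⟨u, hu⟩ := hX
  obtain ⟨w, hw⟩ := hXc
  rw [mem_sdiff] at hw
  have huw : u ≠ w := by rintro rfl; exact hw.2 hu
  -- An `(r-1)`-set avoiding `u` is completed by `u` if it leaves `X`, and by `w` if it stays
  -- in `X`; `ψ` undoes this.
  let φ : Finset V → Finset V := fun s => if s ⊆ X then insert w s else insert u s
  let ψ : Finset V → Finset V := fun e => if u ∈ e then e.erase u else e.erase w
  rw [← card_erase_of_mem (hXW hu), ← card_powersetCard]
  refine card_le_card_of_injOn φ (fun s hs => ?_)
    (Set.LeftInvOn.injOn (f₁' := ψ) fun s hs => ?_)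
  all_goals
    rw [mem_coe, mem_powersetCard] at hs
    obtain ⟨hsW, hs_card⟩ := hs
    have hus : u ∉ s := fun h => by simpa using hsW h
    have hsW : s ⊆ W := hsW.trans (erase_subset _ _)
  · simp only [φ, mem_coe, cutEdges, mem_filter, mem_powersetCard]
    split_ifs with hsX
    · have hws : w ∉ s := fun h => hw.2 (hsX h)
      obtain ⟨z, hz⟩ : s.Nonempty := by rw [← card_pos]; omega
      refine ⟨⟨insert_subset hw.1 hsW, by rw [card_insert_of_notMem hws]; omega⟩,
        ⟨z, mem_inter.2 ⟨mem_insert_of_mem hz, hsX hz⟩⟩,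
        ⟨w, mem_inter.2 ⟨mem_insert_self _ _, mem_sdiff.2 hw⟩⟩⟩
    · obtain ⟨z, hz, hzX⟩ := not_subset.1 hsX
      refine ⟨⟨insert_subset (hXW hu) hsW, by rw [card_insert_of_notMem hus]; omega⟩,
        ⟨u, mem_inter.2 ⟨mem_insert_self _ _, hu⟩⟩,
        ⟨z, mem_inter.2 ⟨mem_insert_of_mem hz, mem_sdiff.2 ⟨hsW hz, hzX⟩⟩⟩⟩
  · simp only [φ, ψ]
    split_ifs with hsX hu' hu'
    · exact absurd (mem_insert.1 hu') (by simp [huw, hus])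
    · exact erase_insert fun h => hw.2 (hsX h)
    · exact erase_insert hus
    · exact absurd (mem_insert_self u s) hu'

theorem IsKLEdgeMaximal.le_card_cutEdges_of_crossing_notMem {r k l : ℕ} {W X e : Finset V}
    {E : Finset (Finset V)} (hmax : IsKLEdgeMaximal r k l W E) (heW : e ⊆ W)
    (he_card : e.card = r)
    (heE : e ∉ E) (heX : (e ∩ X).Nonempty) (heXc : (e ∩ (W \ X)).Nonempty) :
    k ≤ (cutEdges E W X).card := by
  obtain ⟨S, hSW, E', hE', hE'S, hlS, hconn⟩ := hmax.2.2 e heW he_card heE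
  by_cases heE' : e ∈ E'
  · have heS := hE'S e heE'
    obtain ⟨x, hx⟩ := heX
    obtain ⟨y, hy⟩ := heXc
    simp only [mem_inter, mem_sdiff] at hx hy
    have hcut := hconn (X ∩ S) inter_subset_right ⟨x, mem_inter.2 ⟨hx.2, heS hx.1⟩⟩
      ⟨y, mem_sdiff.2 ⟨heS hy.1, fun h => hy.2.2 (mem_inter.1 h).1⟩⟩
    have := (card_le_card (cutEdges_inter_subset hE' hSW)).trans (card_cutEdges_insert_le e E W X)
    omega
  · obtain ⟨Y, hYS, hY, hYc, hYcut⟩ :=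
      hmax.2.1 S hSW E' ((subset_insert_iff_of_notMem heE').1 hE') hE'S hlS
    have := hconn Y hYS hY hYc
    omega

end

theorem stmt_13_general (n k l r t : ℕ) (hr : 2 ≤ r) (ht2 : k < t.choose (r - 1))
    (hl : t + 1 ≤ l) (hln : l ≤ n)
    (E : Finset (Finset (Fin n)))
    (hmax : IsKLEdgeMaximal r k l Finset.univ E)
    (X : Finset (Fin n)) (hXne : X.Nonempty) (hXprop : X ≠ Finset.univ)
    (hmin : ∀ Y : Finset (Fin n), Y.Nonempty → Y ≠ Finset.univ →
      (cutEdges E Finset.univ X).card ≤ (cutEdges E Finset.univ Y).card) :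
    (∃ e : Finset (Fin n), e.card = r ∧ e ∉ E ∧
        (e ∩ X).Nonempty ∧ (e ∩ (Finset.univ \ X)).Nonempty) ∧
      (cutEdges E Finset.univ X).card = k := by
  have hXc : (univ \ X).Nonempty := sdiff_nonempty.2 fun h => hXprop (univ_subset_iff.1 h)
  have hcut_le : (cutEdges E univ X).card ≤ k := by
    obtain ⟨Y, -, hY, hYc, hYcut⟩ :=
      hmax.2.1 univ subset_rfl E subset_rfl (fun e he => (hmax.1 e he).2) (by simpa using hln)
    exact (hmin Y hY fun h => by simp [h] at hYc).trans hYcut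
  obtain ⟨e, he, heE⟩ : ∃ e ∈ cutEdges (univ.powersetCard r) univ X, e ∉ E := by
    by_contra! hall
    have hcross : cutEdges (univ.powersetCard r) univ X ⊆ cutEdges E univ X :=
      fun e he => mem_filter.2 ⟨hall e he, (mem_filter.1 he).2⟩
    have hcount := (choose_le_card_cutEdges_powersetCard hr (subset_univ X) hXne hXc).trans
      (card_le_card hcross)
    have := Nat.choose_le_choose (r - 1) (show t ≤ n - 1 by omega)
    rw [card_univ, Fintype.card_fin] at hcount
    omega
  simp only [cutEdges, mem_filter, mem_powersetCard] at he
  obtain ⟨⟨-, he_card⟩, heX, heXc⟩ := he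
  exact ⟨⟨e, he_card, heE, heX, heXc⟩,
    le_antisymm hcut_le
      (hmax.le_card_cutEdges_of_crossing_notMem (subset_univ e) he_card heE heX heXc)⟩

theorem stmt_13 (n k l r t : ℕ) (hk : 2 ≤ k) (hr : 2 ≤ r)
    (ht1 : (t - 1).choose (r - 1) ≤ k) (ht2 : k < t.choose (r - 1))
    (hl : t + 1 ≤ l) (hln : l ≤ n)
    (E : Finset (Finset (Fin n)))
    (hmax : IsKLEdgeMaximal r k l Finset.univ E)
    (X : Finset (Fin n)) (hXne : X.Nonempty) (hXprop : X ≠ Finset.univ)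
    (hmin : ∀ Y : Finset (Fin n), Y.Nonempty → Y ≠ Finset.univ →
      (cutEdges E Finset.univ X).card ≤ (cutEdges E Finset.univ Y).card) :
    (∃ e : Finset (Fin n), e.card = r ∧ e ∉ E ∧
        (e ∩ X).Nonempty ∧ (e ∩ (Finset.univ \ X)).Nonempty) ∧
      (cutEdges E Finset.univ X).card = k :=
  stmt_13_general n k l r t hr ht2 hl hln E hmax X hXne hXprop hmin
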